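/- Let K be a compact subset of SL(2,ℂ) and M > 0. Then there exists N > 0 such that for all B, C ∈ K and all z ∈ ℂ with |z| ≤ M, ‖B·A(z)·B⁻¹ − C·A(z)·C⁻¹‖ ≤ N·‖B − C‖·|z|, where A(z) = diag(e^{z/2}, e^{−z/2}). -/

import Mathlib

/-- The norm `‖[[a,b],[c,d]]‖ = max (|a|+|b|) (|c|+|d|)` on 2×2 complex matrices. -/
noncomputable def mnorm (A : Matrix (Fin 2) (Fin 2) ℂ) : ℝ :=
  max (‖A 0 0‖ + ‖A 0 1‖) (‖A 1 0‖ + ‖A 1 1‖)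

/-- `A(z) = diag (e^{z/2}, e^{-z/2})`, the isometry with axis `(0,∞)` and complex
displacement `z`. -/
noncomputable def Amat (z : ℂ) : Matrix (Fin 2) (Fin 2) ℂ :=
  !![Complex.exp (z / 2), 0; 0, Complex.exp (-z / 2)]

/-!
Put `E = A(z) - 1`. Because `B B⁻¹ = C C⁻¹ = 1`,
`B A(z) B⁻¹ - C A(z) C⁻¹ = (B - C) E B⁻¹ + C E (B⁻¹ - C⁻¹)` with `B⁻¹ - C⁻¹ = B⁻¹ (C - B) C⁻¹`,
so in a submultiplicative norm (and `mnorm` is the `L^∞` operator norm) the left side is at most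
`(‖B⁻¹‖ + ‖C‖ ‖B⁻¹‖ ‖C⁻¹‖) ‖E‖ ‖B - C‖`. Inversion is continuous on invertible matrices, so this
factor is bounded on the compact set `K`, and `‖E‖ ≤ |z| e^{|z|}` by the power series of `exp`.
-/

open Ring in
theorem norm_mul_mul_inverse_sub_mul_mul_inverse_le {R : Type*} [NormedRing R] {a b : R}
    (ha : IsUnit a) (hb : IsUnit b) (x : R) :
    ‖a * x * a⁻¹ʳ - b * x * b⁻¹ʳ‖ ≤
      (‖a⁻¹ʳ‖ + ‖b‖ * ‖a⁻¹ʳ‖ * ‖b⁻¹ʳ‖) * ‖x - 1‖ * ‖a - b‖ := by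
  have conj_eq {c : R} (hc : IsUnit c) : c * x * c⁻¹ʳ = c * (x - 1) * c⁻¹ʳ + 1 := by
    rw [mul_sub, mul_one, sub_mul, Ring.mul_inverse_cancel c hc, sub_add_cancel]
  have key : a * x * a⁻¹ʳ - b * x * b⁻¹ʳ =
      (a - b) * (x - 1) * a⁻¹ʳ + b * (x - 1) * (a⁻¹ʳ * (b - a) * b⁻¹ʳ) := by
    rw [← Ring.inverse_sub_inverse (iff_of_true ha hb), conj_eq ha, conj_eq hb]
    noncomm_ring
  rw [key]
  calc _ ≤ ‖a - b‖ * ‖x - 1‖ * ‖a⁻¹ʳ‖ + ‖b‖ * ‖x - 1‖ * (‖a⁻¹ʳ‖ * ‖b - a‖ * ‖b⁻¹ʳ‖) := by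
        refine (norm_add_le _ _).trans (add_le_add (norm_mul₃_le ..) ?_)
        exact (norm_mul₃_le ..).trans (by gcongr; exact norm_mul₃_le ..)
    _ = _ := by rw [norm_sub_rev b a]; ring

theorem Complex.norm_exp_sub_one_le_norm_mul_exp (w : ℂ) :
    ‖Complex.exp w - 1‖ ≤ ‖w‖ * Real.exp ‖w‖ := by
  simpa using Complex.norm_exp_sub_sum_le_norm_mul_exp w 1

theorem mnorm_Amat_sub_one_le (z : ℂ) : mnorm (Amat z - 1) ≤ ‖z‖ * Real.exp ‖z‖ := by
  have diag : mnorm (Amat z - 1) =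
      max ‖Complex.exp (z / 2) - 1‖ ‖Complex.exp (-z / 2) - 1‖ := by
    simp [mnorm, Amat]
  have entry_le (w : ℂ) (hw : ‖w‖ = ‖z‖ / 2) : ‖Complex.exp w - 1‖ ≤ ‖z‖ * Real.exp ‖z‖ := by
    refine (Complex.norm_exp_sub_one_le_norm_mul_exp w).trans ?_
    rw [hw]
    gcongr <;> linarith [norm_nonneg z]
  have hz : ‖z / 2‖ = ‖z‖ / 2 := by simp
  rw [diag]
  exact max_le (entry_le _ hz) (entry_le _ (by rw [neg_div, norm_neg, hz]))

section

open scoped Matrix.Norms.Operator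

theorem Matrix.exists_pos_norm_le_and_norm_inv_le {n R : Type*} [Fintype n] [DecidableEq n]
    [NormedCommRing R] [CompleteSpace R] {K : Set (Matrix n n R)} (hK : IsCompact K)
    (hdet : ∀ A ∈ K, IsUnit A.det) : ∃ C > 0, ∀ A ∈ K, ‖A‖ ≤ C ∧ ‖A⁻¹‖ ≤ C := by
  have hinv : ContinuousOn Inv.inv K := fun A hA =>
    (continuousAt_matrix_inv A
      (NormedRing.inverse_continuousAt (hdet A hA).unit)).continuousWithinAt
  obtain ⟨C, hC, hKC⟩ := (hK.union (hK.image_of_continuousOn hinv)).isBounded.exists_pos_norm_le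
  exact ⟨C, hC, fun A hA => ⟨hKC A (.inl hA), hKC _ (.inr ⟨A, hA, rfl⟩)⟩⟩

theorem mnorm_eq_norm (A : Matrix (Fin 2) (Fin 2) ℂ) : mnorm A = ‖A‖ := by
  simp [mnorm, Matrix.linfty_opNorm_def, Fin.univ_succ]

theorem mnorm_nonneg (A : Matrix (Fin 2) (Fin 2) ℂ) : 0 ≤ mnorm A :=
  mnorm_eq_norm A ▸ norm_nonneg A

theorem mnorm_conj_sub_conj_le {B C : Matrix (Fin 2) (Fin 2) ℂ} (hB : IsUnit B.det)
    (hC : IsUnit C.det) (X : Matrix (Fin 2) (Fin 2) ℂ) :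
    mnorm (B * X * B⁻¹ - C * X * C⁻¹) ≤
      (mnorm B⁻¹ + mnorm C * mnorm B⁻¹ * mnorm C⁻¹) * mnorm (X - 1) * mnorm (B - C) := by
  simp only [mnorm_eq_norm, Matrix.nonsing_inv_eq_ringInverse]
  exact norm_mul_mul_inverse_sub_mul_mul_inverse_le
    (Matrix.isUnit_iff_isUnit_det B |>.2 hB) (Matrix.isUnit_iff_isUnit_det C |>.2 hC) X

theorem exists_pos_mnorm_le_and_mnorm_inv_le {K : Set (Matrix (Fin 2) (Fin 2) ℂ)}
    (hK : IsCompact K) (hdet : ∀ A ∈ K, IsUnit A.det) :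
    ∃ R > 0, ∀ A ∈ K, mnorm A ≤ R ∧ mnorm A⁻¹ ≤ R := by
  simpa only [mnorm_eq_norm] using Matrix.exists_pos_norm_le_and_norm_inv_le hK hdet

end

theorem conjugated_displacement_estimate_general
    (K : Set (Matrix (Fin 2) (Fin 2) ℂ)) (hK : IsCompact K)
    (hdet : ∀ A ∈ K, A.det = 1) (M : ℝ) :
    ∃ N > 0, ∀ B ∈ K, ∀ C ∈ K, ∀ z : ℂ, ‖z‖ ≤ M →
      mnorm (B * Amat z * B⁻¹ - C * Amat z * C⁻¹) ≤ N * mnorm (B - C) * ‖z‖ := by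
  have hunit : ∀ A ∈ K, IsUnit A.det := fun A hA => hdet A hA ▸ isUnit_one
  obtain ⟨R, hR, hKR⟩ := exists_pos_mnorm_le_and_mnorm_inv_le hK hunit
  refine ⟨(R + R ^ 3) * Real.exp M, by positivity, fun B hB C hC z hz => ?_⟩
  obtain ⟨-, hBinv⟩ := hKR B hB
  obtain ⟨hCR, hCinv⟩ := hKR C hC
  calc _ ≤ (mnorm B⁻¹ + mnorm C * mnorm B⁻¹ * mnorm C⁻¹) * mnorm (Amat z - 1) * mnorm (B - C) :=
        mnorm_conj_sub_conj_le (hunit B hB) (hunit C hC) (Amat z)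
    _ ≤ (R + R * R * R) * (‖z‖ * Real.exp M) * mnorm (B - C) := by
        gcongr
        any_goals exact mnorm_nonneg _
        exact (mnorm_Amat_sub_one_le z).trans (by gcongr)
    _ = _ := by ring

/-- Let `K` be a compact subset of `SL(2,ℂ)` and `M > 0`. Then there is `N > 0`
such that for all `B, C ∈ K` and all `z` with `|z| ≤ M`,
`‖B·A(z)·B⁻¹ − C·A(z)·C⁻¹‖ ≤ N·‖B − C‖·|z|`. -/
theorem conjugated_displacement_estimate
    (K : Set (Matrix (Fin 2) (Fin 2) ℂ)) (hK : IsCompact K)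
    (hdet : ∀ A ∈ K, A.det = 1) (M : ℝ) (hM : 0 < M) :
    ∃ N > 0, ∀ B ∈ K, ∀ C ∈ K, ∀ z : ℂ, ‖z‖ ≤ M →
      mnorm (B * Amat z * B⁻¹ - C * Amat z * C⁻¹) ≤ N * mnorm (B - C) * ‖z‖ :=
  conjugated_displacement_estimate_general K hK hdet M
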